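/- arXiv:1804.09099 — 8 statements merged into one kernel-verified Lean document; each statement's English description precedes it below -/
import Mathlib

section
/- Let G = (V, E) be a topological graph where V is a metrizable topological space and the edge set E is closed in V × V. Then G is locally independent: every compact independent set in G is contained in an open independent set. -/
/-- A topological graph with metrizable vertex set and closed edge set is
locally independent: every compact independent set is contained in an open independent set. -/
theorem stmt_0 {V : Type*} [TopologicalSpace V] [TopologicalSpace.MetrizableSpace V]
    (E : Set (V × V))
    (hsymm : ∀ x y : V, (x, y) ∈ E → (y, x) ∈ E)
    (hloopless : ∀ x : V, (x, x) ∉ E)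
    (hclosed : IsClosed E)
    (I : Set V) (hI : IsCompact I)
    (hind : ∀ x ∈ I, ∀ y ∈ I, (x, y) ∉ E) :
    ∃ S : Set V, IsOpen S ∧ I ⊆ S ∧ ∀ x ∈ S, ∀ y ∈ S, (x, y) ∉ E := by
  letI := TopologicalSpace.metrizableSpaceMetric V
  have hII : IsCompact (I ×ˢ I) := hI.prod hI
  have hsub : I ×ˢ I ⊆ Eᶜ := by
    rintro ⟨x, y⟩ ⟨hx, hy⟩
    exact hind x hx y hy
  obtain ⟨δ, hδ, hthick⟩ := hII.exists_thickening_subset_open hclosed.isOpen_compl hsub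
  refine ⟨Metric.thickening (δ / 2) I, Metric.isOpen_thickening, ?_, ?_⟩
  · exact Metric.self_subset_thickening (by linarith) I
  · intro x hx y hy hxy
    rw [Metric.mem_thickening_iff] at hx hy
    obtain ⟨a, ha, hxa⟩ := hx
    obtain ⟨b, hb, hyb⟩ := hy
    have : (x, y) ∈ Metric.thickening δ (I ×ˢ I) := by
      rw [Metric.mem_thickening_iff]
      refine ⟨(a, b), ⟨ha, hb⟩, ?_⟩
      rw [Prod.dist_eq]
      exact max_lt (by linarith) (by linarith)
    exact hthick this hxy
end

section
/- Let G = (V, E) be a locally-independent topological graph. Then the graph G' = (V, cl E), where cl E is the topological closure of E in V × V, is also locally independent. Moreover, if ω is an inner-regular Borel measure on V, then the measurable independence numbers agree: α_ω(G') = α_ω(G). -/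
open MeasureTheory

/-- A topological graph (vertex set `V`, edge set `E ⊆ V × V`) is locally independent if
every compact independent set is contained in an open independent set. -/
def LocallyIndependent {V : Type*} [TopologicalSpace V] (E : Set (V × V)) : Prop :=
  ∀ I : Set V, IsCompact I → (∀ x ∈ I, ∀ y ∈ I, (x, y) ∉ E) →
    ∃ S : Set V, IsOpen S ∧ I ⊆ S ∧ ∀ x ∈ S, ∀ y ∈ S, (x, y) ∉ E

/-- The measurable independence number `α_ω` of the graph with edge set `E`. -/
noncomputable def measIndepNum {V : Type*} [TopologicalSpace V] [MeasurableSpace V]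
    (ω : Measure V) (E : Set (V × V)) : ENNReal :=
  sSup {m : ENNReal | ∃ I : Set V, MeasurableSet I ∧
    (∀ x ∈ I, ∀ y ∈ I, (x, y) ∉ E) ∧ m = ω I}

/-- if `G = (V, E)` is locally independent then so is `G' = (V, cl E)`, and
for an inner-regular Borel measure `ω` the measurable independence numbers agree. -/
theorem stmt_1 {V : Type*} [TopologicalSpace V] [MeasurableSpace V] [BorelSpace V]
    (E : Set (V × V)) (hli : LocallyIndependent E)
    (ω : Measure V) (hreg : ω.InnerRegular) :
    LocallyIndependent (closure E) ∧
      measIndepNum ω (closure E) = measIndepNum ω E := by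
  -- key: an open set independent for E is independent for closure E
  have key : ∀ S : Set V, IsOpen S → (∀ x ∈ S, ∀ y ∈ S, (x, y) ∉ E) →
      ∀ x ∈ S, ∀ y ∈ S, (x, y) ∉ closure E := by
    intro S hS hind x hx y hy hxy
    have hopen : IsOpen (S ×ˢ S) := hS.prod hS
    have hmem : (x, y) ∈ S ×ˢ S := ⟨hx, hy⟩
    rcases mem_closure_iff.1 hxy (S ×ˢ S) hopen hmem with ⟨⟨a, b⟩, ⟨ha, hb⟩, hab⟩
    exact hind a ha b hb hab
  have hmono : ∀ I : Set V, (∀ x ∈ I, ∀ y ∈ I, (x, y) ∉ closure E) →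
      ∀ x ∈ I, ∀ y ∈ I, (x, y) ∉ E := fun I h x hx y hy hxy =>
    h x hx y hy (subset_closure hxy)
  constructor
  · intro I hIc hind
    obtain ⟨S, hSo, hIS, hSind⟩ := hli I hIc (hmono I hind)
    exact ⟨S, hSo, hIS, key S hSo hSind⟩
  · apply le_antisymm
    · apply sSup_le_sSup
      rintro m ⟨I, hIm, hind, rfl⟩
      exact ⟨I, hIm, hmono I hind, rfl⟩
    · apply sSup_le
      rintro m ⟨I, hIm, hind, rfl⟩
      refine le_of_forall_lt fun r hr => ?_
      obtain ⟨K, hKI, hKc, hrK⟩ := hreg.innerRegular hIm r hr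
      have hKind : ∀ x ∈ K, ∀ y ∈ K, (x, y) ∉ E := fun x hx y hy =>
        hind x (hKI hx) y (hKI hy)
      obtain ⟨S, hSo, hKS, hSind⟩ := hli K hKc hKind
      have hmem : ω S ∈ {m : ENNReal | ∃ I : Set V, MeasurableSet I ∧
          (∀ x ∈ I, ∀ y ∈ I, (x, y) ∉ closure E) ∧ m = ω I} :=
        ⟨S, hSo.measurableSet, key S hSo hSind, rfl⟩
      exact lt_of_lt_of_le (lt_of_lt_of_le hrK (ω.mono hKS)) (le_sSup hmem)
end

section
/- For a finite graph G = (V, E), the optimal value of the conic program: maximize ⟨J, A⟩ subject to tr A = 1, A(x,y) = 0 for all (x,y) ∈ E, and A completely positive, equals the independence number α(G). -/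
open Finset

/-- A symmetric matrix is completely positive if it is a conic combination of
rank-one matrices `f ⊗ f*` with `f` entrywise nonnegative. -/
def Matrix.IsCompletelyPositive {V : Type*} [Fintype V] (A : Matrix V V ℝ) : Prop :=
  ∃ (k : ℕ) (c : Fin k → ℝ) (f : Fin k → V → ℝ),
    (∀ i, 0 ≤ c i) ∧ (∀ i x, 0 ≤ f i x) ∧
    A = ∑ i, c i • Matrix.of (fun x y => f i x * f i y)

/-- The independence number of a finite graph. -/
noncomputable def indepNum {V : Type*} (G : SimpleGraph V) : ℕ :=
  sSup {n : ℕ | ∃ s : Finset V, (∀ x ∈ s, ∀ y ∈ s, ¬ G.Adj x y) ∧ s.card = n}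

/-- for a finite graph `G`, the optimal value of the completely-positive
conic program equals the independence number `α(G)`. -/
theorem stmt_2 {V : Type*} [Fintype V] [Nonempty V] (G : SimpleGraph V) :
    IsGreatest {t : ℝ | ∃ A : Matrix V V ℝ, A.IsCompletelyPositive ∧
        A.trace = 1 ∧ (∀ x y : V, G.Adj x y → A x y = 0) ∧
        t = ∑ x, ∑ y, A x y}
      (indepNum G : ℝ) := by
  classical
  set S : Set ℕ := {n : ℕ | ∃ s : Finset V, (∀ x ∈ s, ∀ y ∈ s, ¬ G.Adj x y) ∧ s.card = n}
    with hSdef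
  have hbdd : BddAbove S := ⟨Fintype.card V, by
    rintro n ⟨s, -, rfl⟩; exact s.card_le_univ⟩
  have hne : S.Nonempty := ⟨0, ∅, by simp, rfl⟩
  have hle : ∀ s : Finset V, (∀ x ∈ s, ∀ y ∈ s, ¬ G.Adj x y) → s.card ≤ indepNum G :=
    fun s hs => le_csSup hbdd ⟨s, hs, rfl⟩
  have h1 : 1 ≤ indepNum G := by
    obtain ⟨v⟩ := (inferInstance : Nonempty V)
    have := hle {v} (by simp)
    simpa using this
  have hαpos : (0:ℝ) < (indepNum G : ℝ) := by exact_mod_cast h1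
  obtain ⟨s, hs, hcard⟩ : indepNum G ∈ S := Nat.sSup_mem hne hbdd
  constructor
  · -- membership: scaled indicator matrix of a maximum independent set
    set g : V → ℝ := fun x => if x ∈ s then 1 else 0 with hg
    have hgsum : ∑ x, g x = (indepNum G : ℝ) := by
      simp [hg, ← hcard]
    have hgsq : ∀ x, g x * g x = g x := by
      intro x; by_cases h : x ∈ s <;> simp [hg, h]
    refine ⟨((indepNum G : ℝ))⁻¹ • Matrix.of (fun x y => g x * g y), ?_, ?_, ?_, ?_⟩
    · exact ⟨1, fun _ => ((indepNum G : ℝ))⁻¹, fun _ => g,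
        fun _ => by positivity,
        fun _ x => by by_cases h : x ∈ s <;> simp [hg, h],
        by simp⟩
    · simp only [Matrix.trace, Matrix.diag, Matrix.smul_apply, Matrix.of_apply]
      rw [← Finset.smul_sum]
      simp only [hgsq]
      rw [hgsum]
      simp [smul_eq_mul, inv_mul_cancel₀ hαpos.ne']
    · intro x y hxy
      simp only [Matrix.smul_apply, Matrix.of_apply, smul_eq_mul]
      rcases em (x ∈ s) with hx | hx
      · have : y ∉ s := fun hy => hs x hx y hy hxy
        simp [hg, this]
      · simp [hg, hx]
    · simp only [Matrix.smul_apply, Matrix.of_apply, smul_eq_mul]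
      rw [show (∑ x, ∑ y, ((indepNum G:ℝ))⁻¹ * (g x * g y))
          = ((indepNum G:ℝ))⁻¹ * ((∑ x, g x) * (∑ y, g y)) by
        rw [Finset.sum_mul_sum]; rw [Finset.mul_sum]; congr 1; ext x
        rw [Finset.mul_sum]]
      rw [hgsum]
      field_simp
  · -- upper bound
    rintro t ⟨A, ⟨k, c, f, hc, hf, hA⟩, htr, hedge, rfl⟩
    have hAxy : ∀ x y, A x y = ∑ i, c i * (f i x * f i y) := by
      intro x y; rw [hA]; simp [Matrix.sum_apply]
    have htr' : ∑ i, c i * ∑ x, (f i x)^2 = 1 := by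
      rw [← htr]
      simp only [Matrix.trace, Matrix.diag, hAxy, ← sq]
      rw [Finset.sum_comm]
      exact Finset.sum_congr rfl fun i _ => Finset.mul_sum _ _ _
    have hsum : ∑ x, ∑ y, A x y = ∑ i, c i * (∑ x, f i x)^2 := by
      simp only [hAxy]
      rw [show (∑ x, ∑ y, ∑ i, c i * (f i x * f i y))
          = ∑ i, ∑ x, ∑ y, c i * (f i x * f i y) by
        trans ∑ x, ∑ i, ∑ y, c i * (f i x * f i y)
        · exact Finset.sum_congr rfl fun x _ => Finset.sum_comm
        · exact Finset.sum_comm]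
      refine Finset.sum_congr rfl fun i _ => ?_
      rw [sq, Finset.sum_mul_sum, Finset.mul_sum]
      exact Finset.sum_congr rfl fun x _ => (Finset.mul_sum _ _ _).symm
    rw [hsum]
    calc ∑ i, c i * (∑ x, f i x)^2
        ≤ ∑ i, c i * ((indepNum G : ℝ) * ∑ x, (f i x)^2) := by
          refine Finset.sum_le_sum fun i _ => ?_
          rcases eq_or_lt_of_le (hc i) with hci | hci
          · simp [← hci]
          refine mul_le_mul_of_nonneg_left ?_ (hc i)
          set T : Finset V := univ.filter (fun x => f i x ≠ 0) with hT
          have hTsum : ∑ x ∈ T, f i x = ∑ x, f i x := Finset.sum_filter_ne_zero _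
          have hTind : ∀ x ∈ T, ∀ y ∈ T, ¬ G.Adj x y := by
            intro x hx y hy hxy
            have hx' : f i x ≠ 0 := (Finset.mem_filter.mp hx).2
            have hy' : f i y ≠ 0 := (Finset.mem_filter.mp hy).2
            have hpos : 0 < c i * (f i x * f i y) :=
              mul_pos hci (mul_pos ((hf i x).lt_of_ne (Ne.symm hx'))
                ((hf i y).lt_of_ne (Ne.symm hy')))
            have h0 : A x y = 0 := hedge x y hxy
            rw [hAxy] at h0
            have hge : c i * (f i x * f i y) ≤ ∑ j, c j * (f j x * f j y) :=
              Finset.single_le_sum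
                (fun j _ => mul_nonneg (hc j) (mul_nonneg (hf j x) (hf j y)))
                (Finset.mem_univ i)
            linarith
          have hcardT : (T.card : ℝ) ≤ (indepNum G : ℝ) := by
            exact_mod_cast hle T hTind
          calc (∑ x, f i x)^2 = (∑ x ∈ T, f i x)^2 := by rw [hTsum]
            _ ≤ T.card * ∑ x ∈ T, (f i x)^2 := sq_sum_le_card_mul_sum_sq
            _ ≤ (indepNum G : ℝ) * ∑ x, (f i x)^2 := by
                refine mul_le_mul hcardT
                  (Finset.sum_le_sum_of_subset_of_nonneg (Finset.subset_univ _)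
                    (fun x _ _ => sq_nonneg _)) ?_ (by positivity)
                positivity
      _ = (indepNum G : ℝ) * ∑ i, c i * ∑ x, (f i x)^2 := by
          rw [Finset.mul_sum]; exact Finset.sum_congr rfl fun i _ => by ring
      _ = (indepNum G : ℝ) := by rw [htr']; ring
end

section
/- Let G = (V, E) be a finite graph and let A = α₁ f₁⊗f₁* + ... + α_n f_n⊗f_n* with α_i > 0, f_i ≥ 0 entrywise, ‖f_i‖ = 1 for all i, tr A = 1, and A(x,y) = 0 for all (x,y) ∈ E. Then ⟨J, A⟩ ≤ α(G). -/
open Finset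

/-- if `A = Σᵢ αᵢ fᵢ ⊗ fᵢ*` with `αᵢ > 0`, `fᵢ ≥ 0`, `‖fᵢ‖ = 1`,
`tr A = 1` and `A` vanishing on edges, then `⟨J, A⟩ ≤ α(G)`. -/
theorem stmt_4 {V : Type*} [Fintype V] (G : SimpleGraph V)
    (m : ℕ) (α : Fin m → ℝ) (f : Fin m → V → ℝ) (A : Matrix V V ℝ)
    (hα : ∀ i, 0 < α i)
    (hf : ∀ i x, 0 ≤ f i x)
    (hnorm : ∀ i, ∑ x, (f i x) ^ 2 = 1)
    (hA : A = ∑ i, α i • Matrix.of (fun x y => f i x * f i y))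
    (htr : A.trace = 1)
    (hedge : ∀ x y : V, G.Adj x y → A x y = 0) :
    ∑ x, ∑ y, A x y ≤ (indepNum G : ℝ) := by
  classical
  have hAxy : ∀ x y, A x y = ∑ i, α i * (f i x * f i y) := by
    intro x y
    simp [hA, Matrix.sum_apply]
  -- support sets
  set S : Fin m → Finset V := fun i => Finset.univ.filter (fun x => f i x ≠ 0) with hS
  -- each support is independent
  have hindep : ∀ i, ∀ x ∈ S i, ∀ y ∈ S i, ¬ G.Adj x y := by
    intro i x hx y hy hadj
    have hx' : f i x ≠ 0 := by simpa [hS] using hx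
    have hy' : f i y ≠ 0 := by simpa [hS] using hy
    have h0 : A x y = 0 := hedge x y hadj
    have hpos : 0 < α i * (f i x * f i y) := by
      have := mul_pos ((hf i x).lt_of_ne' hx') ((hf i y).lt_of_ne' hy')
      exact mul_pos (hα i) this
    have hle : α i * (f i x * f i y) ≤ A x y := by
      rw [hAxy]
      exact Finset.single_le_sum (f := fun j => α j * (f j x * f j y))
        (fun j _ => mul_nonneg (hα j).le (mul_nonneg (hf j x) (hf j y)))
        (Finset.mem_univ i)
    linarith
  -- bound card S i by indepNum
  have hbdd : BddAbove {n : ℕ | ∃ s : Finset V, (∀ x ∈ s, ∀ y ∈ s, ¬ G.Adj x y) ∧ s.card = n} := by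
    refine ⟨Fintype.card V, ?_⟩
    rintro n ⟨s, -, rfl⟩
    exact Finset.card_le_univ s
  have hcard : ∀ i, (S i).card ≤ indepNum G := fun i =>
    le_csSup hbdd ⟨S i, hindep i, rfl⟩
  -- sum of alphas is 1
  have hsumα : ∑ i, α i = 1 := by
    have h : A.trace = ∑ i, α i := by
      simp only [Matrix.trace, Matrix.diag]
      simp_rw [hAxy]
      rw [Finset.sum_comm]
      refine Finset.sum_congr rfl fun i _ => ?_
      simp_rw [← sq, ← Finset.mul_sum, hnorm i, mul_one]
    rw [h] at htr; exact htr
  -- key: (Σ f i x)^2 ≤ card (S i)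
  have hkey : ∀ i, (∑ x, f i x) ^ 2 ≤ ((S i).card : ℝ) := by
    intro i
    have hsub : ∑ x, f i x = ∑ x ∈ S i, f i x := by
      refine (Finset.sum_subset (Finset.filter_subset _ _) ?_).symm
      intro x _ hx
      simpa [hS] using hx
    have hsub2 : ∑ x ∈ S i, (f i x) ^ 2 ≤ 1 := by
      rw [← hnorm i]
      refine Finset.sum_le_sum_of_subset_of_nonneg (Finset.filter_subset _ _) ?_
      intro x _ _; positivity
    calc (∑ x, f i x) ^ 2 = (∑ x ∈ S i, f i x) ^ 2 := by rw [hsub]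
      _ ≤ ((S i).card : ℝ) * ∑ x ∈ S i, (f i x) ^ 2 := sq_sum_le_card_mul_sum_sq
      _ ≤ ((S i).card : ℝ) * 1 := by
          exact mul_le_mul_of_nonneg_left hsub2 (by positivity)
      _ = ((S i).card : ℝ) := mul_one _
  -- total sum
  have htot : ∑ x, ∑ y, A x y = ∑ i, α i * (∑ x, f i x) ^ 2 := by
    calc ∑ x, ∑ y, A x y
        = ∑ x, ∑ i, ∑ y, α i * (f i x * f i y) := by
          simp_rw [hAxy]
          exact Finset.sum_congr rfl fun x _ => Finset.sum_comm
      _ = ∑ i, ∑ x, ∑ y, α i * (f i x * f i y) := Finset.sum_comm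
      _ = ∑ i, α i * (∑ x, f i x) ^ 2 := by
          refine Finset.sum_congr rfl fun i _ => ?_
          simp_rw [← Finset.mul_sum, ← Finset.sum_mul]
          ring
  rw [htot]
  calc ∑ i, α i * (∑ x, f i x) ^ 2
      ≤ ∑ i, α i * (indepNum G : ℝ) := by
        refine Finset.sum_le_sum fun i _ => ?_
        refine mul_le_mul_of_nonneg_left ?_ (hα i).le
        exact le_trans (hkey i) (by exact_mod_cast hcard i)
    _ = (indepNum G : ℝ) := by rw [← Finset.sum_mul, hsumα, one_mul]
end

section
/- Let G = (V, E) be a finite graph with V nonempty, ∅ ∉ V, W = V ∪ {∅}, and define the matrix Z on W × W by Z(∅,∅) = α(G), Z(∅,x) = Z(x,∅) = −1/2 for x ∈ V, Z(x,y) = 1/2 if (x,y) ∈ E, and Z(x,y) = 0 otherwise. Then for every f : W → {0,1}, one has ⟨Z, f ⊗ f*⟩ ≥ 0; i.e., Z lies in the dual cone of the Boolean-quadratic cone on W. -/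
open Finset

/-- The matrix `Z` on `W × W`, `W = V ∪ {∅}` (modelled as `Option V`, with `none = ∅`):
`Z(∅,∅) = α(G)`, `Z(∅,x) = Z(x,∅) = −1/2`, `Z(x,y) = 1/2` for edges, `0` otherwise. -/
noncomputable def Zmat {V : Type*} (G : SimpleGraph V) [DecidableRel G.Adj] :
    Matrix (Option V) (Option V) ℝ := fun a b =>
  match a, b with
  | none, none => (indepNum G : ℝ)
  | none, some _ => -(1 / 2)
  | some _, none => -(1 / 2)
  | some x, some y => if G.Adj x y then 1 / 2 else 0

/-
Put `s = {x ∈ V | f x = 1}` and let `e(s)` be the number of edges inside `s`. The quadratic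
form equals `f(∅) (α(G) - |s|) + e(s)`, so it suffices that `|s| ≤ α(G) + e(s)`. Deleting an
endpoint of an edge inside `s` lowers `|s|` by one and `e(s)` by at least one; repeating until
`s` is independent gives the bound.
-/

section

variable {V : Type*} (G : SimpleGraph V)

lemma card_le_indepNum [Fintype V] {s : Finset V} (hs : ∀ x ∈ s, ∀ y ∈ s, ¬ G.Adj x y) :
    s.card ≤ indepNum G :=
  le_csSup ⟨Fintype.card V, by rintro n ⟨t, -, rfl⟩; exact t.card_le_univ⟩ ⟨s, hs, rfl⟩

variable [DecidableRel G.Adj]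

def SimpleGraph.adjPairs (s : Finset V) : Finset (V × V) :=
  (s ×ˢ s).filter fun p => G.Adj p.1 p.2

lemma SimpleGraph.card_adjPairs_erase_add_two_le [DecidableEq V] {s : Finset V} {x y : V}
    (hx : x ∈ s) (hy : y ∈ s) (hxy : G.Adj x y) :
    (G.adjPairs (s.erase x)).card + 2 ≤ (G.adjPairs s).card := by
  have hx' : x ∉ s.erase x := Finset.notMem_erase x s
  calc (G.adjPairs (s.erase x)).card + 2
      = (insert (x, y) (insert (y, x) (G.adjPairs (s.erase x)))).card := by
        rw [Finset.card_insert_of_notMem, Finset.card_insert_of_notMem]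
        · simp [SimpleGraph.adjPairs, hx']
        · simp [SimpleGraph.adjPairs, hx', hxy.ne']
    _ ≤ (G.adjPairs s).card := by
        refine Finset.card_le_card (Finset.insert_subset ?_ (Finset.insert_subset ?_ ?_))
        · simp [SimpleGraph.adjPairs, hx, hy, hxy]
        · simp [SimpleGraph.adjPairs, hx, hy, hxy.symm]
        · exact Finset.filter_subset_filter _
            (Finset.product_subset_product (s.erase_subset x) (s.erase_subset x))

theorem two_mul_card_le_two_mul_indepNum_add_card_adjPairs [Fintype V] (s : Finset V) :
    2 * s.card ≤ 2 * indepNum G + (G.adjPairs s).card := by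
  classical
  induction s using Finset.strongInduction with
  | H s ih =>
    by_cases hs : ∀ x ∈ s, ∀ y ∈ s, ¬ G.Adj x y
    · have := card_le_indepNum G hs
      omega
    · push Not at hs
      obtain ⟨x, hx, y, hy, hxy⟩ := hs
      have h_ih := ih (s.erase x) (Finset.erase_ssubset hx)
      have h_pairs := G.card_adjPairs_erase_add_two_le hx hy hxy
      have h_card := Finset.card_erase_add_one hx
      omega

lemma quadForm_Zmat_eq [Fintype V] (f : Option V → ℝ) :
    ∑ x : Option V, ∑ y : Option V, Zmat G x y * (f x * f y)
      = indepNum G * f none ^ 2 - f none * ∑ x, f (some x)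
        + (∑ x, ∑ y, if G.Adj x y then f (some x) * f (some y) else 0) / 2 := by
  have h_cross : ∀ g : V → ℝ, ∑ x, -(1 / 2) * g x = -(1 / 2) * ∑ x, g x := fun g =>
    (Finset.mul_sum ..).symm
  have h_edges : ∑ x, ∑ y, (if G.Adj x y then 1 / 2 else 0) * (f (some x) * f (some y))
      = (∑ x, ∑ y, if G.Adj x y then f (some x) * f (some y) else 0) / 2 := by
    simp only [Finset.sum_div]
    exact Finset.sum_congr rfl fun x _ => Finset.sum_congr rfl fun y _ => by split_ifs <;> ring
  simp only [Fintype.sum_option, Zmat, Finset.sum_add_distrib, h_cross, h_edges]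
  simp only [mul_comm (f (some _)) (f none), ← Finset.mul_sum]
  ring

lemma SimpleGraph.card_adjPairs_eq_sum [Fintype V] [DecidableEq V] (s : Finset V) :
    ((G.adjPairs s).card : ℝ)
      = ∑ x, ∑ y, if G.Adj x y then (if x ∈ s then 1 else 0) * (if y ∈ s then 1 else 0) else 0 := by
  have h_ite : ∀ x y, (if G.Adj x y then (if x ∈ s then 1 else 0) * (if y ∈ s then 1 else 0)
      else 0 : ℝ) = if x ∈ s then (if y ∈ s then (if G.Adj x y then 1 else 0) else 0) else 0 :=
    fun x y => by split_ifs <;> simp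
  simp only [h_ite, Finset.sum_ite_irrel, Finset.sum_const_zero, Finset.sum_ite_mem,
    Finset.univ_inter, SimpleGraph.adjPairs, Finset.natCast_card_filter, Finset.sum_product]

end

/-- for every Boolean `f : W → {0,1}`, `⟨Z, f ⊗ f*⟩ ≥ 0`;
i.e. `Z` lies in the dual cone of the Boolean-quadratic cone on `W`. -/
theorem stmt_6 {V : Type*} [Fintype V] (G : SimpleGraph V) [DecidableRel G.Adj]
    (f : Option V → ℝ) (hf : ∀ w, f w = 0 ∨ f w = 1) :
    0 ≤ ∑ x : Option V, ∑ y : Option V, Zmat G x y * (f x * f y) := by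
  classical
  set s := univ.filter fun x => f (some x) = 1
  have hs : ∀ x, f (some x) = if x ∈ s then 1 else 0 := fun x => by
    rcases hf (some x) with h | h <;> simp [s, h]
  have h_card : ∑ x, f (some x) = s.card := by simp [hs]
  have h_key : (2 * s.card : ℝ) ≤ 2 * indepNum G + (G.adjPairs s).card := by
    exact_mod_cast two_mul_card_le_two_mul_indepNum_add_card_adjPairs G s
  rw [quadForm_Zmat_eq, h_card]
  simp only [hs, ← G.card_adjPairs_eq_sum]
  have h_pairs_nonneg : (0 : ℝ) ≤ (G.adjPairs s).card := Nat.cast_nonneg _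
  rcases hf none with h | h <;> rw [h] <;> linarith
end

section
/- Let V be a compact Hausdorff space with a finite Borel measure ω positive on open sets, let A : V × V → ℝ be continuous, and let U ⊆ V be a finite set. Then for every ε > 0 there exists an ω-partition P of V that separates U (each part contains at most one point of U) and over which A varies less than ε on each product X × Y of parts. -/
/-!
Give the compact Hausdorff space `V` its unique uniform structure. Finitely many small open balls
cover `V`; disjointifying them gives a finite measurable partition into small pieces, some of which
may be null. A null piece is merged into a piece of positive measure that meets its ball: one
exists because the ball is open, hence not null. A merged part stays within three radii of one
centre, so for a suitably small entourage every part separates the points of `U` and, by uniform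
continuity, `A` varies less than `ε` on every product of two parts.
-/

open MeasureTheory

/-- An `ω`-partition: a finite partition of `V` into measurable sets of positive measure. -/
def IsOmegaPartition {V : Type*} [MeasurableSpace V] (ω : Measure V)
    (P : Finset (Set V)) : Prop :=
  (∀ X ∈ P, MeasurableSet X) ∧ (∀ X ∈ P, 0 < ω X) ∧
    (∀ X ∈ P, ∀ Y ∈ P, X ≠ Y → Disjoint X Y) ∧ (⋃ X ∈ P, X) = Set.univ

open Set Filter Function Uniformity

section Partition

variable {V ι : Type*} [MeasurableSpace V] [Finite ι]

theorem exists_isOmegaPartition_of_iUnion_eq_univ {ω : Measure V} {Y : ι → Set V}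
    (hmeas : ∀ i, MeasurableSet (Y i)) (hpos : ∀ i, (Y i).Nonempty → 0 < ω (Y i))
    (hdisj : Pairwise (Disjoint on Y)) (hcover : ⋃ i, Y i = univ) :
    ∃ P : Finset (Set V), IsOmegaPartition ω P ∧ ∀ X ∈ P, ∃ i, X = Y i := by
  classical
  have := Fintype.ofFinite ι
  refine ⟨(Finset.univ.filter fun i => (Y i).Nonempty).image Y,
    ⟨?_, ?_, ?_, ?_⟩, ?_⟩ <;> simp only [Finset.mem_image, Finset.mem_filter, Finset.mem_univ,
      true_and, forall_exists_index, and_imp, forall_apply_eq_imp_iff₂]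
  · exact fun i _ => hmeas i
  · exact hpos
  · intro i _ j _ hne
    exact hdisj fun h => hne (h ▸ rfl)
  · refine eq_univ_of_forall fun x => ?_
    obtain ⟨i, hi⟩ := mem_iUnion.mp (hcover ▸ mem_univ x)
    exact mem_iUnion₂.mpr ⟨Y i, ⟨i, ⟨x, hi⟩, rfl⟩, hi⟩
  · exact fun i _ => ⟨i, rfl⟩

theorem exists_pairwise_disjoint_measurableSet_subset {W : ι → Set V}
    (hW : ∀ i, MeasurableSet (W i)) :
    ∃ X : ι → Set V, (∀ i, MeasurableSet (X i)) ∧ (∀ i, X i ⊆ W i) ∧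
      Pairwise (Disjoint on X) ∧ ⋃ i, X i = ⋃ i, W i := by
  have := Fintype.ofFinite ι
  set e := Fintype.equivFin ι
  refine ⟨fun i => disjointed (W ∘ e.symm) (e i), fun i => ?_, fun i => ?_, ?_, ?_⟩
  · exact disjointedRec (fun _ j ht => ht.diff (hW _)) (hW _)
  · simpa using disjointed_le (W ∘ e.symm) (e i)
  · exact fun i j hij => disjoint_disjointed _ (e.injective.ne hij)
  · rw [e.surjective.iUnion_comp (disjointed (W ∘ e.symm)), iUnion_disjointed]
    exact e.symm.surjective.iUnion_comp W

theorem exists_isOmegaPartition_fiberwise_iUnion {ω : Measure V} {X : ι → Set V}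
    (hmeas : ∀ i, MeasurableSet (X i)) (hdisj : Pairwise (Disjoint on X))
    (hcover : ⋃ i, X i = univ) {f : ι → ι} (hf_pos : ∀ i, 0 < ω (X i) → f i = i)
    (hf : ∀ i, (X i).Nonempty → 0 < ω (X (f i))) :
    ∃ P : Finset (Set V), IsOmegaPartition ω P ∧
      ∀ Z ∈ P, ∃ j, ∀ x ∈ Z, ∃ i, f i = j ∧ x ∈ X i := by
  let Y : ι → Set V := fun j => ⋃ (i) (_ : f i = j), X i
  have mem_Y {x j} : x ∈ Y j ↔ ∃ i, f i = j ∧ x ∈ X i := by simp [Y]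
  have hXY : ∀ i, X i ⊆ Y (f i) := fun i x hx => mem_Y.mpr ⟨i, rfl, hx⟩
  have hYpos : ∀ j, (Y j).Nonempty → 0 < ω (Y j) := by
    rintro j ⟨x, hx⟩
    obtain ⟨i, rfl, hxi⟩ := mem_Y.mp hx
    have hfi := hf i ⟨x, hxi⟩
    have hXfi := hXY (f i)
    rw [hf_pos _ hfi] at hXfi
    exact hfi.trans_le (measure_mono hXfi)
  have hYdisj : Pairwise (Disjoint on Y) := by
    refine fun j j' hjj' => disjoint_left.mpr fun x hx hx' => ?_
    obtain ⟨i, rfl, hxi⟩ := mem_Y.mp hx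
    obtain ⟨i', rfl, hxi'⟩ := mem_Y.mp hx'
    exact disjoint_left.mp (hdisj fun h => hjj' (congrArg f h)) hxi hxi'
  have hYcover : ⋃ j, Y j = univ :=
    eq_univ_of_univ_subset (hcover ▸ iUnion_mono' fun i => ⟨f i, hXY i⟩)
  obtain ⟨P, hP, hPY⟩ := exists_isOmegaPartition_of_iUnion_eq_univ
    (fun j => .iUnion fun i => .iUnion fun _ => hmeas i) hYpos hYdisj hYcover
  refine ⟨P, hP, fun Z hZ => ?_⟩
  obtain ⟨j, rfl⟩ := hPY Z hZ
  exact ⟨j, fun x => mem_Y.mp⟩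

end Partition

theorem exists_isOmegaPartition_of_isOpen_cover {V ι : Type*} [TopologicalSpace V]
    [MeasurableSpace V] [OpensMeasurableSpace V] [Finite ι] {ω : Measure V}
    (hpos : ∀ W : Set V, IsOpen W → W.Nonempty → 0 < ω W) {W : ι → Set V}
    (hW : ∀ i, IsOpen (W i)) (hcover : ⋃ i, W i = univ) :
    ∃ P : Finset (Set V), IsOmegaPartition ω P ∧
      ∀ X ∈ P, ∃ j, ∀ x ∈ X, ∃ i, x ∈ W i ∧ (W j ∩ W i).Nonempty := by
  classical
  obtain ⟨X, hXmeas, hXW, hXdisj, hXcover⟩ :=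
    exists_pairwise_disjoint_measurableSet_subset fun i => (hW i).measurableSet
  rw [hcover] at hXcover
  have hmeets : ∀ i, (W i).Nonempty → ∃ j, 0 < ω (X j ∩ W i) := by
    intro i hi
    by_contra! hnull
    have hWi : W i = ⋃ j, X j ∩ W i := by rw [← iUnion_inter, hXcover, univ_inter]
    have := hpos _ (hW i) hi
    rw [hWi, measure_iUnion_null fun j => nonpos_iff_eq_zero.mp (hnull j)] at this
    exact this.false
  let f : ι → ι := fun i =>
    if 0 < ω (X i) then i else if hi : (W i).Nonempty then (hmeets i hi).choose else i
  have hf_pos : ∀ i, 0 < ω (X i) → f i = i := fun i hi => if_pos hi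
  have hf_meets : ∀ i, (X i).Nonempty → 0 < ω (X (f i) ∩ W i) := by
    intro i hi
    by_cases hXi : 0 < ω (X i)
    · rwa [hf_pos i hXi, inter_eq_left.mpr (hXW i)]
    · simp only [f, if_neg hXi, dif_pos (hi.mono (hXW i))]
      exact (hmeets i (hi.mono (hXW i))).choose_spec
  obtain ⟨P, hP, hPf⟩ := exists_isOmegaPartition_fiberwise_iUnion hXmeas hXdisj hXcover hf_pos
    fun i hi => (hf_meets i hi).trans_le (measure_mono inter_subset_left)
  refine ⟨P, hP, fun Z hZ => ?_⟩
  obtain ⟨j, hj⟩ := hPf Z hZ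
  refine ⟨j, fun x hx => ?_⟩
  obtain ⟨i, rfl, hxi⟩ := hj x hx
  exact ⟨i, hXW i hxi, (nonempty_of_measure_ne_zero (hf_meets i ⟨x, hxi⟩).ne').mono
    (inter_subset_inter_left _ (hXW _))⟩

theorem exists_isOmegaPartition_forall_prod_subset {V : Type*} [UniformSpace V] [CompactSpace V]
    [MeasurableSpace V] [OpensMeasurableSpace V] {ω : Measure V}
    (hpos : ∀ W : Set V, IsOpen W → W.Nonempty → 0 < ω W) {s : SetRel V V} (hs : s ∈ 𝓤 V) :
    ∃ P : Finset (Set V), IsOmegaPartition ω P ∧ ∀ X ∈ P, X ×ˢ X ⊆ s := by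
  obtain ⟨t, ht, _, hts⟩ := comp_symm_mem_uniformity_sets hs
  obtain ⟨t', ht', _, ht't⟩ := comp_comp_symm_mem_uniformity_sets ht
  obtain ⟨D, ⟨hD, hDopen, _⟩, hDt'⟩ := uniformity_hasBasis_open_symmetric.mem_iff.mp ht'
  obtain ⟨F, hF⟩ := isCompact_univ.elim_finite_subcover (fun x : V => UniformSpace.ball x D)
    (fun x => UniformSpace.isOpen_ball x hDopen) fun x _ => mem_iUnion.mpr ⟨x, refl_mem_uniformity hD⟩
  obtain ⟨P, hP, hPsmall⟩ := exists_isOmegaPartition_of_isOpen_cover hpos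
    (W := fun c : F => UniformSpace.ball c D) (fun c => UniformSpace.isOpen_ball _ hDopen)
    (eq_univ_of_univ_subset fun x hx => by simpa using hF hx)
  refine ⟨P, hP, fun X hX => ?_⟩
  obtain ⟨c, hc⟩ := hPsmall X hX
  have hnear : ∀ x ∈ X, ((c : V), x) ∈ t := by
    intro x hx
    obtain ⟨i, hix, w, hcw, hiw⟩ := hc x hx
    exact ht't ⟨i, ⟨w, hDt' hcw, hDt' (SetRel.symm D hiw)⟩, hDt' hix⟩
  rintro ⟨x, x'⟩ ⟨hx, hx'⟩
  exact hts ⟨c, SetRel.symm t (hnear x hx), hnear x' hx'⟩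

theorem UniformContinuous.exists_forall_dist_lt {α β γ : Type*} [UniformSpace α] [UniformSpace β]
    [PseudoMetricSpace γ] {f : α × β → γ} (hf : UniformContinuous f) {ε : ℝ} (hε : 0 < ε) :
    ∃ u ∈ 𝓤 α, ∃ v ∈ 𝓤 β, ∀ a a' b b', (a, a') ∈ u → (b, b') ∈ v →
      dist (f (a, b)) (f (a', b')) < ε := by
  obtain ⟨u, hu, v, hv, huv⟩ := entourageProd_subset (hf (Metric.dist_mem_uniformity hε))
  exact ⟨u, hu, v, hv, fun a a' b b' ha hb => huv (show ((a, b), (a', b')) ∈ _ from ⟨ha, hb⟩)⟩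

theorem Set.Finite.exists_mem_uniformity_eq {α : Type*} [UniformSpace α] [T0Space α]
    {U : Set α} (hU : U.Finite) : ∃ s ∈ 𝓤 α, ∀ x ∈ U, ∀ y ∈ U, (x, y) ∈ s → x = y := by
  refine ⟨⋂ p ∈ U ×ˢ U, {q | q = p → p.1 = p.2}, (biInter_mem (hU.prod hU)).mpr fun p _ => ?_,
    fun x hx y hy hxy => mem_iInter₂.mp hxy (x, y) ⟨hx, hy⟩ rfl⟩
  by_cases hp : p.1 = p.2
  · exact mem_of_superset univ_mem fun _ _ _ => hp
  · obtain ⟨r, hr, hpr⟩ : ∃ r ∈ 𝓤 α, p ∉ r := by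
      by_contra! h
      exact hp (eq_of_uniformity fun hr => h _ hr)
    exact mem_of_superset hr fun q hq hqp => (hpr (hqp ▸ hq)).elim

theorem stmt_12_general {V : Type*} [TopologicalSpace V] [CompactSpace V] [T2Space V]
    [MeasurableSpace V] [BorelSpace V]
    (ω : Measure V)
    (hpos : ∀ W : Set V, IsOpen W → W.Nonempty → 0 < ω W)
    (A : V × V → ℝ) (hAcont : Continuous A)
    (U : Finset V) (ε : ℝ) (hε : 0 < ε) :
    ∃ P : Finset (Set V), IsOmegaPartition ω P ∧
      (∀ X ∈ P, ((U : Set V) ∩ X).Subsingleton) ∧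
      (∀ X ∈ P, ∀ Y ∈ P, ∀ x ∈ X, ∀ x' ∈ X, ∀ y ∈ Y, ∀ y' ∈ Y,
        |A (x, y) - A (x', y')| < ε) := by
  let _ : UniformSpace V := uniformSpaceOfCompactR1
  obtain ⟨s₁, hs₁, s₂, hs₂, hA⟩ :=
    (CompactSpace.uniformContinuous_of_continuous hAcont).exists_forall_dist_lt hε
  obtain ⟨s₀, hs₀, hU⟩ := U.finite_toSet.exists_mem_uniformity_eq
  obtain ⟨P, hP, hPs⟩ :=
    exists_isOmegaPartition_forall_prod_subset hpos (inter_mem (inter_mem hs₁ hs₂) hs₀)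
  refine ⟨P, hP, fun X hX u hu u' hu' => ?_, fun X hX Y hY x hx x' hx' y hy y' hy' => ?_⟩
  · exact hU u hu.1 u' hu'.1 (hPs X hX ⟨hu.2, hu'.2⟩).2
  · simpa only [Real.dist_eq] using
      hA x x' y y' (hPs X hX ⟨hx, hx'⟩).1.1 (hPs Y hY ⟨hy, hy'⟩).1.2

/-- for any continuous kernel `A` on a compact Hausdorff space with a
finite Borel measure `ω` positive on open sets, any finite `U ⊆ V`, and any `ε > 0`,
there is an `ω`-partition that separates `U` and over which `A` varies less than `ε`. -/
theorem stmt_12 {V : Type*} [TopologicalSpace V] [CompactSpace V] [T2Space V]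
    [MeasurableSpace V] [BorelSpace V]
    (ω : Measure V) [IsFiniteMeasure ω]
    (hpos : ∀ W : Set V, IsOpen W → W.Nonempty → 0 < ω W)
    (A : V × V → ℝ) (hAcont : Continuous A)
    (U : Finset V) (ε : ℝ) (hε : 0 < ε) :
    ∃ P : Finset (Set V), IsOmegaPartition ω P ∧
      (∀ X ∈ P, ((U : Set V) ∩ X).Subsingleton) ∧
      (∀ X ∈ P, ∀ Y ∈ P, ∀ x ∈ X, ∀ x' ∈ X, ∀ y ∈ Y, ∀ y' ∈ Y,
        |A (x, y) - A (x', y')| < ε) :=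
  stmt_12_general ω hpos A hAcont U ε hε
end

section
/- Let Γ be a compact Hausdorff topological group acting continuously and transitively on a compact Hausdorff space V. If Γ is metrizable via a bi-invariant metric, then V is metrizable via a Γ-invariant metric; specifically, d_V(x,y) = inf{ d_Γ(1,σ) : σ ∈ Γ, σx = y } defines a Γ-invariant metric inducing the topology of V. -/
/-!
The infimum defining `d_V(x, y)` runs over the closed, hence compact, set `{σ | σ • x = y}`,
and `σ ↦ d_Γ(1, σ)` is continuous, so it is attained. With a minimizer at hand, the metric
axioms for `d_V` follow from those of `d_Γ`: symmetry from `d_Γ(1, σ⁻¹) = d_Γ(1, σ)`, the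
triangle inequality from composing minimizers, and `Γ`-invariance from conjugation invariance
of `d_Γ(1, ·)`, which is where bi-invariance is needed. For the topology, small `d_V`-balls
around `x` are images of small `d_Γ`-balls around `1` under `σ ↦ σ • x`; conversely, the orbit
map `σ ↦ σ • x₀` is `1`-Lipschitz and, being a continuous surjection from a compact space onto
a Hausdorff one, a quotient map.
-/

/-- The candidate `Γ`-invariant metric on `V`:
`d_V(x, y) = inf { d_Γ(1, σ) : σ ∈ Γ, σ • x = y }`. -/
noncomputable def dV {Γ V : Type*} [Group Γ] [MulAction Γ V]
    (dG : Γ → Γ → ℝ) (x y : V) : ℝ :=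
  sInf {r : ℝ | ∃ σ : Γ, σ • x = y ∧ dG 1 σ = r}

open Topology

section TriangleTopology

variable {X : Type*} [TopologicalSpace X] {d : X → X → ℝ}

theorem isOpen_setOf_lt_of_triangle (htri : ∀ x y z, d x z ≤ d x y + d y z)
    (hopen : ∀ s : Set X, (∀ x ∈ s, ∃ ε > 0, ∀ y, d x y < ε → y ∈ s) → IsOpen s)
    (a : X) (ε : ℝ) : IsOpen {y | d a y < ε} :=
  hopen _ fun x hx => ⟨ε - d a x, sub_pos.2 hx, fun y hy =>
    show d a y < ε by linarith [htri a x y]⟩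

theorem continuous_of_triangle (hself : ∀ x, d x x = 0) (hsymm : ∀ x y, d x y = d y x)
    (htri : ∀ x y z, d x z ≤ d x y + d y z)
    (hopen : ∀ s : Set X, (∀ x ∈ s, ∃ ε > 0, ∀ y, d x y < ε → y ∈ s) → IsOpen s)
    (a : X) : Continuous (d a) := by
  refine continuous_iff_continuousAt.2 fun b => Metric.tendsto_nhds.2 fun ε hε => ?_
  have hball : {y | d b y < ε} ∈ 𝓝 b :=
    (isOpen_setOf_lt_of_triangle htri hopen b ε).mem_nhds (by simpa [hself] using hε)
  filter_upwards [hball] with y hy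
  rw [Real.dist_eq, abs_sub_lt_iff]
  have h₁ := htri a b y
  have h₂ := htri a y b
  have h₃ := hsymm y b
  constructor <;> linarith

end TriangleTopology

section OrbitMetric

variable {Γ V : Type*} [Group Γ] [MulAction Γ V] {dG : Γ → Γ → ℝ}

theorem dV_nonneg (hpos : ∀ σ, 0 ≤ dG 1 σ) (x y : V) : 0 ≤ dV dG x y :=
  Real.sInf_nonneg <| by
    rintro _ ⟨σ, -, rfl⟩
    exact hpos σ

theorem dV_le_of_smul_eq (hpos : ∀ σ, 0 ≤ dG 1 σ) {x y : V} {σ : Γ} (h : σ • x = y) :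
    dV dG x y ≤ dG 1 σ :=
  csInf_le ⟨0, by rintro _ ⟨τ, -, rfl⟩; exact hpos τ⟩ ⟨σ, h, rfl⟩

theorem exists_smul_eq_lt_of_dV_lt {x y : V} (hxy : ∃ σ : Γ, σ • x = y) {ε : ℝ}
    (h : dV dG x y < ε) : ∃ σ : Γ, σ • x = y ∧ dG 1 σ < ε := by
  obtain ⟨σ, hσ⟩ := hxy
  obtain ⟨_, ⟨τ, hτ, rfl⟩, hlt⟩ :=
    exists_lt_of_csInf_lt (s := {r | ∃ σ : Γ, σ • x = y ∧ dG 1 σ = r}) ⟨_, σ, hσ, rfl⟩ h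
  exact ⟨τ, hτ, hlt⟩

theorem exists_smul_eq_dG_eq_dV [TopologicalSpace Γ] [CompactSpace Γ] [TopologicalSpace V]
    [T2Space V] [ContinuousSMul Γ V] (hpos : ∀ σ, 0 ≤ dG 1 σ) (hcont : Continuous (dG 1))
    {x y : V} (hxy : ∃ σ : Γ, σ • x = y) : ∃ σ : Γ, σ • x = y ∧ dG 1 σ = dV dG x y := by
  have hcompact : IsCompact {σ : Γ | σ • x = y} :=
    (isClosed_eq (continuous_id.smul continuous_const) continuous_const).isCompact
  obtain ⟨σ, hσ, hmin⟩ := hcompact.exists_isMinOn hxy hcont.continuousOn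
  refine ⟨σ, hσ, le_antisymm ?_ (dV_le_of_smul_eq hpos hσ)⟩
  refine le_csInf ⟨dG 1 σ, σ, hσ, rfl⟩ ?_
  rintro _ ⟨τ, hτ, rfl⟩
  exact hmin hτ

theorem dV_eq_zero_iff (hpos : ∀ σ, 0 ≤ dG 1 σ) (hzero : ∀ σ, dG 1 σ = 0 ↔ σ = 1)
    (hmin : ∀ x y : V, ∃ σ : Γ, σ • x = y ∧ dG 1 σ = dV dG x y) {x y : V} :
    dV dG x y = 0 ↔ x = y := by
  refine ⟨fun h => ?_, ?_⟩
  · obtain ⟨σ, hσ, hd⟩ := hmin x y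
    rwa [(hzero σ).1 (hd.trans h), one_smul] at hσ
  · rintro rfl
    exact le_antisymm ((dV_le_of_smul_eq hpos (one_smul Γ x)).trans ((hzero 1).2 rfl).le)
      (dV_nonneg hpos x x)

theorem dV_comm (hinv : ∀ σ : Γ, dG 1 σ⁻¹ = dG 1 σ) (x y : V) : dV dG x y = dV dG y x := by
  unfold dV
  congr 1
  ext r
  constructor <;> rintro ⟨σ, rfl, rfl⟩ <;> exact ⟨σ⁻¹, inv_smul_smul σ _, hinv σ⟩

theorem dV_triangle (hpos : ∀ σ, 0 ≤ dG 1 σ) (htri : ∀ σ τ ρ, dG σ ρ ≤ dG σ τ + dG τ ρ)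
    (hleft : ∀ l σ τ : Γ, dG (l * σ) (l * τ) = dG σ τ)
    (hmin : ∀ x y : V, ∃ σ : Γ, σ • x = y ∧ dG 1 σ = dV dG x y) (x y z : V) :
    dV dG x z ≤ dV dG x y + dV dG y z := by
  obtain ⟨σ, rfl, hσ⟩ := hmin x y
  obtain ⟨τ, rfl, hτ⟩ := hmin (σ • x) z
  calc dV dG x (τ • σ • x) ≤ dG 1 (τ * σ) := dV_le_of_smul_eq hpos (mul_smul τ σ x)
    _ ≤ dG 1 τ + dG τ (τ * σ) := htri 1 τ (τ * σ)
    _ = dG 1 σ + dG 1 τ := by rw [← mul_one τ, mul_assoc, hleft, one_mul, add_comm]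
    _ = _ := by rw [hσ, hτ]

theorem dV_smul_smul (hconj : ∀ σ τ : Γ, dG 1 (σ * τ * σ⁻¹) = dG 1 τ) (σ : Γ) (x y : V) :
    dV dG (σ • x) (σ • y) = dV dG x y := by
  unfold dV
  congr 1
  ext r
  constructor
  · rintro ⟨τ, hτ, rfl⟩
    refine ⟨σ⁻¹ * τ * σ, ?_, by simpa using hconj σ⁻¹ τ⟩
    rw [mul_smul, mul_smul, hτ, inv_smul_smul]
  · rintro ⟨τ, rfl, rfl⟩
    exact ⟨σ * τ * σ⁻¹, by simp [mul_smul], hconj σ τ⟩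

theorem dV_smul_smul_le (hpos : ∀ σ, 0 ≤ dG 1 σ)
    (hright : ∀ σ τ g : Γ, dG (σ * g) (τ * g) = dG σ τ) (σ τ : Γ) (x : V) :
    dV dG (σ • x) (τ • x) ≤ dG σ τ := by
  have h : (τ * σ⁻¹) • σ • x = τ • x := by rw [smul_smul, inv_mul_cancel_right]
  refine (dV_le_of_smul_eq hpos h).trans_eq ?_
  rw [← hright 1 (τ * σ⁻¹) σ, one_mul, inv_mul_cancel_right]

theorem exists_dV_lt_subset_of_isOpen [TopologicalSpace Γ] [TopologicalSpace V]
    [ContinuousSMul Γ V] (htrans : ∀ x y : V, ∃ σ : Γ, σ • x = y)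
    (hball : ∀ s : Set Γ, IsOpen s → ∀ σ ∈ s, ∃ ε > 0, ∀ τ, dG σ τ < ε → τ ∈ s)
    {s : Set V} (hs : IsOpen s) {x : V} (hx : x ∈ s) :
    ∃ ε > 0, ∀ y, dV dG x y < ε → y ∈ s := by
  have horbit : IsOpen ((· • x) ⁻¹' s : Set Γ) :=
    hs.preimage (continuous_id.smul continuous_const)
  obtain ⟨ε, hε, hsub⟩ := hball _ horbit 1 (by simpa using hx)
  refine ⟨ε, hε, fun y hy => ?_⟩
  obtain ⟨σ, rfl, hσ⟩ := exists_smul_eq_lt_of_dV_lt (htrans x y) hy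
  exact hsub σ hσ

theorem isOpen_of_forall_exists_dV_lt_subset [TopologicalSpace Γ] [CompactSpace Γ]
    [TopologicalSpace V] [T2Space V] [ContinuousSMul Γ V]
    (htrans : ∀ x y : V, ∃ σ : Γ, σ • x = y) (hpos : ∀ σ, 0 ≤ dG 1 σ)
    (hright : ∀ σ τ g : Γ, dG (σ * g) (τ * g) = dG σ τ)
    (hopen : ∀ s : Set Γ, (∀ σ ∈ s, ∃ ε > 0, ∀ τ, dG σ τ < ε → τ ∈ s) → IsOpen s)
    {s : Set V} (hs : ∀ x ∈ s, ∃ ε > 0, ∀ y, dV dG x y < ε → y ∈ s) : IsOpen s := by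
  obtain rfl | ⟨x₀, -⟩ := s.eq_empty_or_nonempty
  · exact isOpen_empty
  have hquot : IsQuotientMap (· • x₀ : Γ → V) :=
    .of_surjective_continuous (htrans x₀) (continuous_id.smul continuous_const)
  refine hquot.isOpen_preimage.1 <| hopen _ fun σ hσ => ?_
  obtain ⟨ε, hε, hsub⟩ := hs _ hσ
  exact ⟨ε, hε, fun τ hτ => hsub _ ((dV_smul_smul_le hpos hright σ τ x₀).trans_lt hτ)⟩

end OrbitMetric

theorem stmt_14_general {Γ V : Type*}
    [Group Γ] [TopologicalSpace Γ] [CompactSpace Γ]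
    [TopologicalSpace V] [T2Space V]
    [MulAction Γ V] [ContinuousSMul Γ V]
    (htrans : ∀ x y : V, ∃ σ : Γ, σ • x = y)
    (dG : Γ → Γ → ℝ)
    (hmetric : (∀ σ τ : Γ, 0 ≤ dG σ τ) ∧ (∀ σ τ : Γ, dG σ τ = 0 ↔ σ = τ) ∧
      (∀ σ τ : Γ, dG σ τ = dG τ σ) ∧ (∀ σ τ ρ : Γ, dG σ ρ ≤ dG σ τ + dG τ ρ))
    (hbiinv : ∀ lam gam σ τ : Γ, dG (lam * σ * gam) (lam * τ * gam) = dG σ τ)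
    (hinduces : ∀ s : Set Γ, IsOpen s ↔
      ∀ x ∈ s, ∃ ε > 0, ∀ y : Γ, dG x y < ε → y ∈ s) :
    (∀ x y : V, 0 ≤ dV dG x y) ∧
      (∀ x y : V, dV dG x y = 0 ↔ x = y) ∧
      (∀ x y : V, dV dG x y = dV dG y x) ∧
      (∀ x y z : V, dV dG x z ≤ dV dG x y + dV dG y z) ∧
      (∀ (σ : Γ) (x y : V), dV dG (σ • x) (σ • y) = dV dG x y) ∧
      (∀ s : Set V, IsOpen s ↔
        ∀ x ∈ s, ∃ ε > 0, ∀ y : V, dV dG x y < ε → y ∈ s) := by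
  obtain ⟨hpos, hzero, hsymm, htri⟩ := hmetric
  have hleft : ∀ l σ τ : Γ, dG (l * σ) (l * τ) = dG σ τ := fun l σ τ => by
    simpa using hbiinv l 1 σ τ
  have hright : ∀ σ τ g : Γ, dG (σ * g) (τ * g) = dG σ τ := fun σ τ g => by
    simpa using hbiinv 1 g σ τ
  have hinv : ∀ σ : Γ, dG 1 σ⁻¹ = dG 1 σ := fun σ => by
    rw [← hleft σ, mul_one, mul_inv_cancel, hsymm]
  have hconj : ∀ σ τ : Γ, dG 1 (σ * τ * σ⁻¹) = dG 1 τ := fun σ τ => by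
    simpa using hbiinv σ σ⁻¹ 1 τ
  have hcont : Continuous (dG 1) :=
    continuous_of_triangle (fun σ => (hzero σ σ).2 rfl) hsymm htri
      (fun s => (hinduces s).2) 1
  have hmin : ∀ x y : V, ∃ σ : Γ, σ • x = y ∧ dG 1 σ = dV dG x y := fun x y =>
    exists_smul_eq_dG_eq_dV (hpos 1) hcont (htrans x y)
  refine ⟨dV_nonneg (hpos 1), fun x y => ?_, dV_comm hinv, dV_triangle (hpos 1) htri hleft hmin,
    dV_smul_smul hconj, fun s => ⟨fun hs x hx => ?_, ?_⟩⟩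
  · exact dV_eq_zero_iff (hpos 1) (fun σ => (hzero 1 σ).trans eq_comm) hmin
  · exact exists_dV_lt_subset_of_isOpen htrans (fun t => (hinduces t).1) hs hx
  · exact isOpen_of_forall_exists_dV_lt_subset htrans (hpos 1) hright (fun t => (hinduces t).2)

/-- if a compact Hausdorff group `Γ`, metrizable via a bi-invariant
metric `d_Γ`, acts continuously and transitively on a compact Hausdorff space `V`,
then `d_V(x,y) = inf { d_Γ(1,σ) : σx = y }` is a `Γ`-invariant metric inducing the
topology of `V`. -/
theorem stmt_14 {Γ V : Type*}
    [Group Γ] [TopologicalSpace Γ] [IsTopologicalGroup Γ] [CompactSpace Γ] [T2Space Γ]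
    [TopologicalSpace V] [CompactSpace V] [T2Space V]
    [MulAction Γ V] [ContinuousSMul Γ V]
    (htrans : ∀ x y : V, ∃ σ : Γ, σ • x = y)
    (dG : Γ → Γ → ℝ)
    (hmetric : (∀ σ τ : Γ, 0 ≤ dG σ τ) ∧ (∀ σ τ : Γ, dG σ τ = 0 ↔ σ = τ) ∧
      (∀ σ τ : Γ, dG σ τ = dG τ σ) ∧ (∀ σ τ ρ : Γ, dG σ ρ ≤ dG σ τ + dG τ ρ))
    (hbiinv : ∀ lam gam σ τ : Γ, dG (lam * σ * gam) (lam * τ * gam) = dG σ τ)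
    (hinduces : ∀ s : Set Γ, IsOpen s ↔
      ∀ x ∈ s, ∃ ε > 0, ∀ y : Γ, dG x y < ε → y ∈ s) :
    (∀ x y : V, 0 ≤ dV dG x y) ∧
      (∀ x y : V, dV dG x y = 0 ↔ x = y) ∧
      (∀ x y : V, dV dG x y = dV dG y x) ∧
      (∀ x y z : V, dV dG x z ≤ dV dG x y + dV dG y z) ∧
      (∀ (σ : Γ) (x y : V), dV dG (σ • x) (σ • y) = dV dG x y) ∧
      (∀ s : Set V, IsOpen s ↔
        ∀ x ∈ s, ∃ ε > 0, ∀ y : V, dV dG x y < ε → y ∈ s) :=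
  stmt_14_general htrans dG hmetric hbiinv hinduces
end

section
/- If f : ℝⁿ → ℂ is continuous and of positive type, then lim_{T→∞} (vol[−T,T]ⁿ)^{−2} ∫_{[−T,T]ⁿ} ∫_{[−T,T]ⁿ} f(x − y) dy dx = M(f), where M(f) = lim_{T→∞} (vol[−T,T]ⁿ)^{−1} ∫_{[−T,T]ⁿ} f(x) dx is the mean value of f. In particular, if ν is the finite Borel measure with f(x) = ∫ e^{iu·x} dν(u) (Bochner's theorem), then both limits equal ν({0}). -/
/-!
A continuous positive-type function is the characteristic function `φ_ν` of its Bochner measure,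
and for finite measures `μ, ν` Fubini gives the duality `∫ φ_ν dμ = ∫ φ_μ dν`. Averaging `f` over
the cube `Q_T = [-T, T]ⁿ` is integrating `φ_ν` against the uniform law `U_T` on `Q_T`, so it equals
`∫ φ_{U_T} dν`; the double average is the same with `U_T ∗ (-U_T)`, whose characteristic function
is `|φ_{U_T}|²`. Since `φ_{U_T}(u) = ∏ᵢ sinc (T uᵢ)` is bounded by `1`, equals `1` at `u = 0` and
tends to `0` elsewhere, dominated convergence sends both averages to `ν {0}`.
-/

open MeasureTheory RealInnerProductSpace ComplexOrder

/-- The cube `[−T, T]ⁿ` in `ℝⁿ`. -/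
def cube (n : ℕ) (T : ℝ) : Set (EuclideanSpace ℝ (Fin n)) :=
  {x | ∀ i, x i ∈ Set.Icc (-T) T}

open Filter Topology Real ProbabilityTheory

section CharFun

variable {E : Type*} [NormedAddCommGroup E] [InnerProductSpace ℝ E] [MeasurableSpace E]
  [BorelSpace E]

theorem charFun_map_neg (μ : Measure E) (t : E) :
    charFun (μ.map Neg.neg) t = charFun μ (-t) := by
  simpa using charFun_map_smul (μ := μ) (-1) t

variable [SecondCountableTopology E]

theorem integral_charFun_comm (μ ν : Measure E) [IsFiniteMeasure μ] [IsFiniteMeasure ν] :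
    ∫ x, charFun ν x ∂μ = ∫ u, charFun μ u ∂ν := by
  simp_rw [charFun_apply]
  rw [integral_integral_swap ((integrable_const (1 : ℝ)).mono (by fun_prop)
    (ae_of_all _ fun _ => by simp [Function.uncurry_def, Complex.norm_exp_ofReal_mul_I]))]
  simp_rw [real_inner_comm]

theorem integrable_charFun (μ ν : Measure E) [IsFiniteMeasure μ] [IsFiniteMeasure ν] :
    Integrable (charFun ν) μ :=
  (integrable_const (ν.real Set.univ)).mono measurable_charFun.aestronglyMeasurable
    (ae_of_all _ fun x => (norm_charFun_le x).trans (le_abs_self _))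

theorem integral_integral_charFun_sub (μ ν : Measure E) [IsFiniteMeasure μ] [IsFiniteMeasure ν] :
    ∫ x, ∫ y, charFun ν (x - y) ∂μ ∂μ = ∫ u, charFun μ u * charFun μ (-u) ∂ν := by
  calc ∫ x, ∫ y, charFun ν (x - y) ∂μ ∂μ
      = ∫ x, ∫ y, charFun ν (x + y) ∂μ.map Neg.neg ∂μ := by
        congr with x
        rw [integral_map measurable_neg.aemeasurable (by fun_prop)]
        simp_rw [sub_eq_add_neg]
    _ = ∫ x, charFun ν x ∂(μ ∗ μ.map Neg.neg) := (integral_conv (integrable_charFun _ _)).symm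
    _ = ∫ u, charFun μ u * charFun μ (-u) ∂ν := by
        simp_rw [integral_charFun_comm, charFun_conv, charFun_map_neg]

end CharFun

theorem integral_cond {Ω E : Type*} [MeasurableSpace Ω] [NormedAddCommGroup E] [NormedSpace ℝ E]
    (μ : Measure Ω) (s : Set Ω) (g : Ω → E) :
    ∫ x, g x ∂μ[|s] = (μ.real s)⁻¹ • ∫ x in s, g x ∂μ := by
  rw [ProbabilityTheory.cond, integral_smul_measure, ENNReal.toReal_inv, measureReal_def]

theorem charFun_volume_restrict_Icc {T : ℝ} (hT : 0 < T) (v : ℝ) :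
    charFun (volume.restrict (Set.Icc (-T) T)) v = 2 * T * sinc (T * v) := by
  -- the Dirac case of `integral_charFun_Icc` is exactly this integral
  have h := integral_charFun_Icc (μ := Measure.dirac v) hT
  simp only [charFun_dirac, integral_dirac] at h
  rw [charFun_apply_real, integral_Icc_eq_integral_Ioc,
    ← intervalIntegral.integral_of_le (by linarith), ← h]
  simp [mul_comm]

theorem volume_restrict_cube (n : ℕ) (T : ℝ) :
    volume.restrict (cube n T) =
      (Measure.pi fun _ : Fin n => volume.restrict (Set.Icc (-T) T)).map (WithLp.toLp 2) := by
  rw [← (PiLp.volume_preserving_toLp (Fin n)).map_eq, ← MeasurableEquiv.coe_toLp,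
    MeasurableEquiv.restrict_map, volume_pi, ← Measure.restrict_pi_pi]
  congr 2
  ext x
  simp only [cube, Set.mem_preimage, Set.mem_univ_pi, Set.mem_ofPred_eq]
  rfl

theorem charFun_volume_restrict_cube {n : ℕ} {T : ℝ} (hT : 0 < T) (u : EuclideanSpace ℝ (Fin n)) :
    charFun (volume.restrict (cube n T)) u = (2 * T) ^ n * ∏ i, (sinc (T * u i) : ℂ) := by
  simp [volume_restrict_cube, charFun_pi, charFun_volume_restrict_Icc hT, Finset.prod_mul_distrib]

theorem measureReal_cube {n : ℕ} {T : ℝ} (hT : 0 < T) : volume.real (cube n T) = (2 * T) ^ n := by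
  have h := charFun_volume_restrict_cube (n := n) hT 0
  simp only [charFun_zero, measureReal_restrict_apply_univ, PiLp.zero_apply, mul_zero, sinc_zero,
    Complex.ofReal_one, Finset.prod_const_one, mul_one] at h
  exact_mod_cast h

theorem charFun_cond_cube {n : ℕ} {T : ℝ} (hT : 0 < T) (u : EuclideanSpace ℝ (Fin n)) :
    charFun volume[|cube n T] u = ∏ i, (sinc (T * u i) : ℂ) := by
  rw [charFun_apply, integral_cond, ← charFun_apply, charFun_volume_restrict_cube hT,
    measureReal_cube hT, Complex.real_smul]
  push_cast
  field_simp

theorem Real.abs_sinc_le_inv_abs {x : ℝ} (hx : x ≠ 0) : |sinc x| ≤ |x|⁻¹ := by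
  rw [sinc_of_ne_zero hx, abs_div, div_eq_mul_inv]
  exact mul_le_of_le_one_left (by positivity) (abs_sin_le_one x)

theorem tendsto_sinc_mul_atTop (v : ℝ) :
    Tendsto (fun T => sinc (T * v)) atTop (𝓝 (if v = 0 then 1 else 0)) := by
  split_ifs with hv
  · simp [hv]
  refine squeeze_zero_norm' ?_ ((tendsto_inv_atTop_zero.const_mul |v|⁻¹).trans (by simp))
  filter_upwards [eventually_gt_atTop 0] with T hT
  simpa [abs_mul, abs_of_pos hT] using abs_sinc_le_inv_abs (mul_ne_zero hT.ne' hv)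

theorem tendsto_prod_sinc_mul_atTop {ι : Type*} [Fintype ι] (v : ι → ℝ) :
    Tendsto (fun T => ∏ i, sinc (T * v i)) atTop (𝓝 (if v = 0 then 1 else 0)) := by
  simpa [Fintype.prod_boole, funext_iff] using
    tendsto_finsetProd Finset.univ fun i _ => tendsto_sinc_mul_atTop (v i)

theorem tendsto_integral_pow_prod_sinc {ι : Type*} [Fintype ι] (ν : Measure (EuclideanSpace ℝ ι))
    [IsFiniteMeasure ν] {k : ℕ} (hk : k ≠ 0) :
    Tendsto (fun T => ∫ u, (∏ i, sinc (T * u i)) ^ k ∂ν) atTop (𝓝 (ν.real {0})) := by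
  have hlim (u : EuclideanSpace ℝ ι) : Tendsto (fun T => (∏ i, sinc (T * u i)) ^ k) atTop
      (𝓝 (({0} : Set (EuclideanSpace ℝ ι)).indicator 1 u)) := by
    convert (tendsto_prod_sinc_mul_atTop u.ofLp).pow k using 2
    by_cases hu : u = 0 <;> simp [hu, hk]
  have hbound (T : ℝ) (u : EuclideanSpace ℝ ι) : ‖(∏ i, sinc (T * u i)) ^ k‖ ≤ 1 := by
    rw [norm_pow, norm_prod]
    exact pow_le_one₀ (by positivity) (Finset.prod_le_one (fun _ _ => by positivity)
      fun i _ => abs_sinc_le_one _)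
  have h := tendsto_integral_filter_of_dominated_convergence (fun _ => 1)
    (Eventually.of_forall fun _ => (by fun_prop : Continuous _).aestronglyMeasurable)
    (Eventually.of_forall fun T => ae_of_all _ (hbound T)) (integrable_const (μ := ν) 1)
    (ae_of_all _ hlim)
  rwa [integral_indicator_one (measurableSet_singleton 0)] at h

theorem stmt_16_general (n : ℕ) (f : EuclideanSpace ℝ (Fin n) → ℂ)
    (ν : Measure (EuclideanSpace ℝ (Fin n))) [IsFiniteMeasure ν]
    (hrep : ∀ x, f x = ∫ u, Complex.exp (Complex.I * (⟪u, x⟫ : ℝ)) ∂ν) :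
    Filter.Tendsto
      (fun T : ℝ => (((volume (cube n T)).toReal : ℂ) ^ 2)⁻¹ *
        ∫ x in cube n T, ∫ y in cube n T, f (x - y))
      Filter.atTop (nhds ((ν {0}).toReal : ℂ)) ∧
    Filter.Tendsto
      (fun T : ℝ => (((volume (cube n T)).toReal : ℂ))⁻¹ * ∫ x in cube n T, f x)
      Filter.atTop (nhds ((ν {0}).toReal : ℂ)) := by
  obtain rfl : f = charFun ν :=
    funext fun x => by simp [hrep, charFun_apply, real_inner_comm, mul_comm]
  have hmean (T : ℝ) (g : EuclideanSpace ℝ (Fin n) → ℂ) :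
      ((volume (cube n T)).toReal : ℂ)⁻¹ * ∫ x in cube n T, g x = ∫ x, g x ∂volume[|cube n T] := by
    rw [integral_cond, Complex.real_smul, Complex.ofReal_inv, measureReal_def]
  constructor
  · refine (tendsto_integral_pow_prod_sinc ν two_ne_zero).ofReal.congr' ?_
    filter_upwards [eventually_gt_atTop 0] with T hT
    rw [sq, mul_inv, mul_assoc, ← integral_const_mul]
    simp_rw [hmean, integral_integral_charFun_sub, charFun_cond_cube hT, ← integral_complex_ofReal]
    push_cast
    simp [sq]
  · refine (tendsto_integral_pow_prod_sinc ν one_ne_zero).ofReal.congr' ?_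
    filter_upwards [eventually_gt_atTop 0] with T hT
    rw [hmean, integral_charFun_comm, ← integral_complex_ofReal]
    simp [charFun_cond_cube hT]

/-- for a continuous function `f : ℝⁿ → ℂ` of positive type, with Bochner
representation `f(x) = ∫ e^{i u·x} dν(u)`, both the mean value
`lim_T vol([−T,T]ⁿ)⁻¹ ∫_{[−T,T]ⁿ} f` and the double average
`lim_T vol([−T,T]ⁿ)⁻² ∫∫_{[−T,T]ⁿ} f(x−y) dy dx` equal `ν({0})`; in particular the two
limits agree. -/
theorem stmt_16 (n : ℕ) (f : EuclideanSpace ℝ (Fin n) → ℂ)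
    (hcont : Continuous f)
    (hpt : ∀ U : Finset (EuclideanSpace ℝ (Fin n)),
      Matrix.PosSemidef (Matrix.of fun x y : ↥U => f ((x : EuclideanSpace ℝ (Fin n)) - y)))
    (ν : Measure (EuclideanSpace ℝ (Fin n))) [IsFiniteMeasure ν]
    (hrep : ∀ x, f x = ∫ u, Complex.exp (Complex.I * (⟪u, x⟫ : ℝ)) ∂ν) :
    Filter.Tendsto
      (fun T : ℝ => (((volume (cube n T)).toReal : ℂ) ^ 2)⁻¹ *
        ∫ x in cube n T, ∫ y in cube n T, f (x - y))
      Filter.atTop (nhds ((ν {0}).toReal : ℂ)) ∧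
    Filter.Tendsto
      (fun T : ℝ => (((volume (cube n T)).toReal : ℂ))⁻¹ * ∫ x in cube n T, f x)
      Filter.atTop (nhds ((ν {0}).toReal : ℂ)) :=
  stmt_16_general n f ν hrep
end
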